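/- arXiv:1703.01176 — 2 statements merged into one kernel-verified Lean document; each statement's English description precedes it below -/
import Mathlib

section
/- For every vector field $K \in C_0^2(\mathbb{R}^2, \mathbb{R}^2)$ and every $t \in \mathbb{R}$, there is an absolute constant $C$ such that $\|\langle t-r \rangle \nabla K\|_{L^2(\mathbb{R}^2)} \le C\left( \|\langle t-r \rangle \nabla \cdot K\|_{L^2} + \|\langle t-r \rangle \nabla^\perp \cdot K\|_{L^2} + \|K\|_{L^2}\right)$, where $r = |x|$ and $\langle \sigma \rangle = \sqrt{1+\sigma^2}$. -/
open MeasureTheory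

noncomputable section

abbrev E2 := EuclideanSpace ℝ (Fin 2)

/-- `i`-th partial derivative of a scalar function on `ℝ²`. -/
noncomputable def pd (i : Fin 2) (f : E2 → ℝ) (x : E2) : ℝ :=
  fderiv ℝ f x (EuclideanSpace.single i 1)

/-- The weight `⟨t - r⟩ = √(1 + (t - |x|)²)`. -/
noncomputable def jb (t : ℝ) (x : E2) : ℝ := Real.sqrt (1 + (t - ‖x‖) ^ 2)

/-!
Expanding the square, `|∇K|² = (∇·K)² + (∇⊥·K)² - 2 det ∇K`, and the Jacobian determinant is a
null form: `det ∇K = ∇·V` with `V = K₀ (∂₁K₁, -∂₀K₁)`. The squared weight `⟨t-r⟩²` is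
differentiable off the origin with `|∇⟨t-r⟩²| ≤ 2⟨t-r⟩`, so the divergence theorem turns
`∫ ⟨t-r⟩² det ∇K` into `-∫ V·∇⟨t-r⟩²`, which is at most `2 ∫ ⟨t-r⟩ |K₀| (|∂₀K₁| + |∂₁K₁|)` in
absolute value. Absorbing this by AM-GM gives
`‖⟨t-r⟩∇K‖² ≤ 2‖⟨t-r⟩∇·K‖² + 2‖⟨t-r⟩∇⊥·K‖² + 32‖K‖²`, hence the estimate with `C = 6`.
-/

open Set

theorem integral_divergence_eq_zero_of_hasCompactSupport {n : ℕ} {E : Type*}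
    [NormedAddCommGroup E] [NormedSpace ℝ E] [CompleteSpace E]
    {f : Fin (n + 1) → (Fin (n + 1) → ℝ) → E}
    {f' : Fin (n + 1) → (Fin (n + 1) → ℝ) → (Fin (n + 1) → ℝ) →L[ℝ] E}
    {s : Set (Fin (n + 1) → ℝ)} (hs : s.Countable) (hc : ∀ i, Continuous (f i))
    (hd : ∀ x ∉ s, ∀ i, HasFDerivAt (f i) (f' i x) x)
    (hf : ∀ i, HasCompactSupport (f i)) (hf' : ∀ i, HasCompactSupport (f' i))
    (hi : Integrable fun x => ∑ i, f' i x (Pi.single i 1)) :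
    ∫ x, ∑ i, f' i x (Pi.single i 1) = 0 := by
  obtain ⟨R, hR, hsub⟩ : ∃ R, 0 < R ∧
      (⋃ i, tsupport (f i) ∪ tsupport (f' i)) ⊆ Metric.ball 0 R :=
    (isCompact_iUnion fun i => (hf i).union (hf' i)).isBounded.subset_ball_lt 0 0
  have hout : ∀ x : Fin (n + 1) → ℝ, R ≤ ‖x‖ → ∀ i, f i x = 0 ∧ f' i x = 0 := by
    intro x hx i
    have hx' : x ∉ tsupport (f i) ∪ tsupport (f' i) := fun h => by
      have := hsub (mem_iUnion_of_mem i h)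
      rw [mem_ball_zero_iff] at this
      linarith
    exact ⟨image_eq_zero_of_notMem_tsupport fun h => hx' (Or.inl h),
      image_eq_zero_of_notMem_tsupport fun h => hx' (Or.inr h)⟩
  have hface : ∀ i (c : ℝ), |c| = R → ∀ y : Fin n → ℝ, f i (Fin.insertNth i c y) = 0 :=
    fun i c hc y => (hout _ (by
      simpa [hc] using norm_le_pi_norm (Fin.insertNth (α := fun _ => ℝ) i c y) i) i).1
  have hbox : ∫ x, ∑ i, f' i x (Pi.single i 1) =
      ∫ x in Icc (fun _ => -R) (fun _ => R), ∑ i, f' i x (Pi.single i 1) := by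
    refine (setIntegral_eq_integral_of_forall_compl_eq_zero fun x hx => ?_).symm
    suffices R ≤ ‖x‖ by simp [hout x this]
    by_contra! hx'
    have hxi : ∀ i, -R ≤ x i ∧ x i ≤ R := fun i =>
      abs_le.mp (((Real.norm_eq_abs _).symm.trans_le (norm_le_pi_norm x i)).trans hx'.le)
    exact hx ⟨fun i => (hxi i).1, fun i => (hxi i).2⟩
  rw [hbox, integral_divergence_of_hasFDerivAt_off_countable' _ _
    (fun _ => by linarith) f f' s hs (fun i => (hc i).continuousOn)
    (fun x hx i => hd x hx.2 i) hi.integrableOn]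
  refine Finset.sum_eq_zero fun i _ => ?_
  simp [hface i R (abs_of_pos hR), hface i (-R) (by simp [abs_of_pos hR])]

theorem EuclideanSpace.integral_divergence_eq_zero_of_hasCompactSupport {n : ℕ} {E : Type*}
    [NormedAddCommGroup E] [NormedSpace ℝ E] [CompleteSpace E]
    {f : Fin (n + 1) → EuclideanSpace ℝ (Fin (n + 1)) → E}
    {f' : Fin (n + 1) → EuclideanSpace ℝ (Fin (n + 1)) → EuclideanSpace ℝ (Fin (n + 1)) →L[ℝ] E}
    {s : Set (EuclideanSpace ℝ (Fin (n + 1)))} (hs : s.Countable) (hc : ∀ i, Continuous (f i))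
    (hd : ∀ x ∉ s, ∀ i, HasFDerivAt (f i) (f' i x) x)
    (hf : ∀ i, HasCompactSupport (f i)) (hf' : ∀ i, HasCompactSupport (f' i))
    (hi : Integrable fun x => ∑ i, f' i x (EuclideanSpace.single i 1)) :
    ∫ x, ∑ i, f' i x (EuclideanSpace.single i 1) = 0 := by
  let L : (Fin (n + 1) → ℝ) ≃L[ℝ] EuclideanSpace ℝ (Fin (n + 1)) :=
    (EuclideanSpace.equiv (Fin (n + 1)) ℝ).symm
  have hL : MeasurePreserving L := PiLp.volume_preserving_toLp _
  have hLe : MeasurableEmbedding L := L.toHomeomorph.measurableEmbedding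
  have hsingle : ∀ i, L (Pi.single i 1) = EuclideanSpace.single i 1 := fun i => rfl
  have key := _root_.integral_divergence_eq_zero_of_hasCompactSupport (hs.preimage L.injective)
    (f := fun i y => f i (L y)) (f' := fun i y => (f' i (L y)).comp (L : _ →L[ℝ] _))
    (fun i => (hc i).comp L.continuous) (fun x hx i => (hd _ hx i).comp x L.hasFDerivAt)
    (fun i => (hf i).comp_homeomorph L.toHomeomorph)
    (fun i => ((hf' i).comp_homeomorph L.toHomeomorph).mono fun y hy h => hy (by
      simp only [Function.comp_apply, ContinuousLinearEquiv.coe_toHomeomorph] at h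
      simp [h]))
  simp only [ContinuousLinearMap.comp_apply, ContinuousLinearEquiv.coe_coe, hsingle] at key
  rw [← hL.integral_comp hLe]
  exact key ((hL.integrable_comp_emb hLe).2 hi)

section PartialDerivative

variable {f g : E2 → ℝ}

theorem pd_eq_comp (j : Fin 2) (f : E2 → ℝ) :
    pd j f = ContinuousLinearMap.apply ℝ ℝ (EuclideanSpace.single j 1) ∘ fderiv ℝ f :=
  rfl

theorem contDiff_pd {m n : WithTop ℕ∞} (hf : ContDiff ℝ n f) (hmn : m + 1 ≤ n) (j : Fin 2) :
    ContDiff ℝ m (pd j f) := by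
  rw [pd_eq_comp]
  exact (ContinuousLinearMap.apply ℝ ℝ _).contDiff.comp (hf.fderiv_right hmn)

theorem pd_eq_zero_of_notMem_tsupport {x : E2} (hx : x ∉ tsupport f) (j : Fin 2) :
    pd j f x = 0 := by
  simp [pd, fderiv_of_notMem_tsupport ℝ hx]

theorem pd_mul {x : E2} (hf : DifferentiableAt ℝ f x) (hg : DifferentiableAt ℝ g x) (j : Fin 2) :
    pd j (fun y => f y * g y) x = pd j f x * g x + f x * pd j g x := by
  simp only [pd, fderiv_fun_mul hf hg, add_apply, smul_apply, smul_eq_mul]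
  ring

theorem pd_neg (x : E2) (j : Fin 2) : pd j (fun y => -f y) x = -pd j f x := by
  simp [pd]

theorem pd_pd_comm (hf : ContDiff ℝ 2 f) (x : E2) : pd 0 (pd 1 f) x = pd 1 (pd 0 f) x := by
  have hdf := ((hf.fderiv_right (m := 1) le_rfl).differentiable one_ne_zero x).hasFDerivAt
  have hpd : ∀ i j, pd i (pd j f) x =
      fderiv ℝ (fderiv ℝ f) x (EuclideanSpace.single i 1) (EuclideanSpace.single j 1) := by
    intro i j
    rw [pd, pd_eq_comp, ((ContinuousLinearMap.apply ℝ ℝ _).hasFDerivAt.comp x hdf).fderiv]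
    rfl
  rw [hpd, hpd]
  exact hf.contDiffAt.isSymmSndFDerivAt (by simp) _ _

theorem jacobian_det_eq_pd_add_pd (hf : ContDiff ℝ 1 f) (hg : ContDiff ℝ 2 g) (x : E2) :
    pd 0 f x * pd 1 g x - pd 1 f x * pd 0 g x =
      pd 0 (fun y => f y * pd 1 g y) x + pd 1 (fun y => -(f y * pd 0 g y)) x := by
  have hfx : DifferentiableAt ℝ f x := (hf.differentiable one_ne_zero).differentiableAt
  have hgx : ∀ j, DifferentiableAt ℝ (pd j g) x := fun j =>
    ((contDiff_pd hg (m := 1) le_rfl j).differentiable one_ne_zero).differentiableAt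
  rw [pd_mul hfx (hgx 1), pd_neg, pd_mul hfx (hgx 0), pd_pd_comm hg]
  ring

end PartialDerivative

section Weight

variable (t : ℝ)

/-- `jb t ^ 2 = 1 + (t - ‖·‖) ^ 2` is differentiable away from the origin, with this derivative. -/
def jbSqDeriv (x : E2) : E2 →L[ℝ] ℝ :=
  (-(2 * (t - ‖x‖))) • fderiv ℝ (fun y : E2 => ‖y‖) x

theorem jb_sq (x : E2) : jb t x ^ 2 = 1 + (t - ‖x‖) ^ 2 :=
  Real.sq_sqrt (by positivity)

theorem abs_sub_norm_le_jb (x : E2) : |t - ‖x‖| ≤ jb t x :=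
  Real.abs_le_sqrt (by linarith [sq_nonneg (t - ‖x‖)])

theorem continuous_jb : Continuous (jb t) := by
  unfold jb
  fun_prop

theorem hasFDerivAt_jb_sq {x : E2} (hx : x ≠ 0) :
    HasFDerivAt (fun y => jb t y ^ 2) (jbSqDeriv t x) x := by
  have hnorm := (contDiffAt_norm ℝ (n := 1) hx).differentiableAt one_ne_zero
  have hr : HasDerivAt (fun r : ℝ => 1 + (t - r) ^ 2) (-(2 * (t - ‖x‖))) ‖x‖ := by
    refine ((((hasDerivAt_id' ‖x‖).const_sub t).fun_pow 2).const_add 1).congr_deriv ?_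
    ring
  simp only [jb_sq]
  exact hr.comp_hasFDerivAt x hnorm.hasFDerivAt

theorem norm_jbSqDeriv_le (x : E2) : ‖jbSqDeriv t x‖ ≤ 2 * jb t x := by
  have hnorm : ‖fderiv ℝ (fun y : E2 => ‖y‖) x‖ ≤ 1 := by
    simpa using norm_fderiv_le_of_lipschitz ℝ (x₀ := x) lipschitzWith_one_norm
  calc ‖jbSqDeriv t x‖ = 2 * |t - ‖x‖| * ‖fderiv ℝ (fun y : E2 => ‖y‖) x‖ := by
        simp [jbSqDeriv, norm_smul]
    _ ≤ 2 * jb t x := by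
        nlinarith [abs_sub_norm_le_jb t x, abs_nonneg (t - ‖x‖),
          norm_nonneg (fderiv ℝ (fun y : E2 => ‖y‖) x)]

theorem measurable_jbSqDeriv_apply (v : E2) : Measurable fun x => jbSqDeriv t x v :=
  ((measurable_const.sub measurable_norm).const_mul 2).neg.mul
    (measurable_fderiv_apply_const ℝ _ v)

theorem abs_jbSqDeriv_single_le (x : E2) (i : Fin 2) :
    |jbSqDeriv t x (EuclideanSpace.single i 1)| ≤ 2 * jb t x := by
  simpa using ((jbSqDeriv t x).le_opNorm (EuclideanSpace.single i 1)).trans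
    (by simpa using norm_jbSqDeriv_le t x)

end Weight

section WeightedDivergence

variable {V : Fin 2 → E2 → ℝ}

theorem integrable_div_jb_sq_mul (hV : ∀ i, ContDiff ℝ 1 (V i))
    (hVc : ∀ i, HasCompactSupport (V i)) (t : ℝ) :
    Integrable fun x => ∑ i, (jb t x ^ 2 * pd i (V i) x +
      V i x * jbSqDeriv t x (EuclideanSpace.single i 1)) := by
  refine integrable_finsetSum _ fun i _ => Integrable.add ?_ ?_
  · exact (((continuous_jb t).pow 2).mul (contDiff_pd (hV i) (m := 0) (by simp) i).continuous)
      |>.integrable_of_hasCompactSupport ((hVc i).fderiv_apply ℝ _).mul_left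
  · refine Integrable.mono' (g := fun x => 2 * jb t x * |V i x|) ?_ ?_ ?_
    · exact (((continuous_const.mul (continuous_jb t)).mul (hV i).continuous.abs)
        |>.integrable_of_hasCompactSupport (hVc i).norm.mul_left)
    · exact ((hV i).continuous.measurable.mul
        (measurable_jbSqDeriv_apply t _)).aestronglyMeasurable
    · refine Filter.Eventually.of_forall fun x => ?_
      rw [Real.norm_eq_abs, abs_mul, mul_comm]
      exact mul_le_mul_of_nonneg_right (abs_jbSqDeriv_single_le t x i) (abs_nonneg _)

theorem integral_div_jb_sq_mul_eq_zero (hV : ∀ i, ContDiff ℝ 1 (V i))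
    (hVc : ∀ i, HasCompactSupport (V i)) (t : ℝ) :
    ∫ x, ∑ i, (jb t x ^ 2 * pd i (V i) x +
      V i x * jbSqDeriv t x (EuclideanSpace.single i 1)) = 0 := by
  have hf : ∀ i, HasCompactSupport fun x => jb t x ^ 2 * V i x :=
    fun i => (hVc i).mul_left (f := fun x => jb t x ^ 2)
  have hf' : ∀ i,
      HasCompactSupport fun x => jb t x ^ 2 • fderiv ℝ (V i) x + V i x • jbSqDeriv t x := fun i =>
    (((hVc i).fderiv ℝ).smul_left (f := fun x => jb t x ^ 2)).add
      ((hVc i).smul_right (f' := jbSqDeriv t))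
  exact EuclideanSpace.integral_divergence_eq_zero_of_hasCompactSupport (n := 1)
    (countable_singleton 0)
    (fun i => ((continuous_jb t).pow 2).mul (hV i).continuous)
    (fun x hx i => (hasFDerivAt_jb_sq t hx).mul ((hV i).differentiable one_ne_zero x).hasFDerivAt)
    hf hf' (integrable_div_jb_sq_mul hV hVc t)

end WeightedDivergence

theorem four_mul_le_of_abs_le {w k x g : ℝ} (hg : |g| ≤ 2 * w) :
    4 * (k * x * g) ≤ w ^ 2 * x ^ 2 + 16 * k ^ 2 := by
  have h₁ : k * x * g ≤ |k * x| * (2 * w) :=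
    calc k * x * g ≤ |k * x * g| := le_abs_self _
      _ = |k * x| * |g| := abs_mul _ _
      _ ≤ |k * x| * (2 * w) := mul_le_mul_of_nonneg_left hg (abs_nonneg _)
  have h₂ : 8 * w * |k * x| ≤ w ^ 2 * x ^ 2 + 16 * k ^ 2 := by
    rw [abs_mul]
    nlinarith [sq_nonneg (w * |x| - 4 * |k|), sq_abs x, sq_abs k]
  linarith

theorem weighted_jacobian_sq_le {w a b c d k₀ k₁ p q g₀ g₁ : ℝ} (hpq : p + q = a * d - b * c)
    (hg₀ : |g₀| ≤ 2 * w) (hg₁ : |g₁| ≤ 2 * w) :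
    w ^ 2 * (a ^ 2 + b ^ 2 + (c ^ 2 + d ^ 2)) ≤
      2 * (w ^ 2 * (a + d) ^ 2 + w ^ 2 * (-b + c) ^ 2 + 16 * (k₀ ^ 2 + k₁ ^ 2)
        - 2 * (w ^ 2 * p + k₀ * d * g₀ + (w ^ 2 * q + -(k₀ * c) * g₁))) := by
  have h₀ := four_mul_le_of_abs_le (k := k₀) (x := d) hg₀
  have h₁ := four_mul_le_of_abs_le (k := k₀) (x := c) (g := -g₁) (by rwa [abs_neg])
  have hq : q = a * d - b * c - p := by linarith
  subst hq
  nlinarith [sq_nonneg (w * a), sq_nonneg (w * b), sq_nonneg k₁]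

theorem sqrt_le_six_mul_add {I D R N : ℝ} (hD : 0 ≤ D) (hR : 0 ≤ R) (hN : 0 ≤ N)
    (h : I ≤ 2 * D + 2 * R + 32 * N) : √I ≤ 6 * (√D + √R + √N) := by
  rw [Real.sqrt_le_iff]
  refine ⟨by positivity, h.trans ?_⟩
  have := Real.sq_sqrt hD; have := Real.sq_sqrt hR; have := Real.sq_sqrt hN
  nlinarith [Real.sqrt_nonneg D, Real.sqrt_nonneg R, Real.sqrt_nonneg N,
    mul_nonneg (Real.sqrt_nonneg D) (Real.sqrt_nonneg R),
    mul_nonneg (Real.sqrt_nonneg D) (Real.sqrt_nonneg N),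
    mul_nonneg (Real.sqrt_nonneg R) (Real.sqrt_nonneg N)]

theorem integral_jb_sq_sum_sq_pd_le {K : Fin 2 → E2 → ℝ} (hK : ∀ i, ContDiff ℝ 2 (K i))
    (hKc : ∀ i, HasCompactSupport (K i)) (t : ℝ) :
    ∫ x, jb t x ^ 2 * ∑ i, ∑ j, pd j (K i) x ^ 2 ≤
      2 * (∫ x, jb t x ^ 2 * (pd 0 (K 0) x + pd 1 (K 1) x) ^ 2)
      + 2 * (∫ x, jb t x ^ 2 * (-pd 1 (K 0) x + pd 0 (K 1) x) ^ 2)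
      + 32 * ∫ x, ∑ i, K i x ^ 2 := by
  -- `∇·V` is the Jacobian determinant of `K`, by `jacobian_det_eq_pd_add_pd`.
  let V : Fin 2 → E2 → ℝ := ![fun y => K 0 y * pd 1 (K 1) y, fun y => -(K 0 y * pd 0 (K 1) y)]
  have hV : ∀ i, ContDiff ℝ 1 (V i) := by
    have hK0 : ContDiff ℝ 1 (K 0) := (hK 0).of_le one_le_two
    have hK1 : ∀ j, ContDiff ℝ 1 (pd j (K 1)) := contDiff_pd (hK 1) le_rfl
    exact Fin.forall_fin_two.2 ⟨hK0.mul (hK1 1), (hK0.mul (hK1 0)).neg⟩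
  have hVc : ∀ i, HasCompactSupport (V i) :=
    Fin.forall_fin_two.2 ⟨(hKc 0).mul_right, (hKc 0).mul_right.neg⟩
  have hpd : ∀ i j, Continuous (pd j (K i)) := fun i j =>
    (contDiff_pd (hK i) (m := 0) (by norm_num) j).continuous
  have hjb := continuous_jb t
  obtain ⟨S, hS, hvanish⟩ : ∃ S : Set E2, IsCompact S ∧
      ∀ x ∉ S, ∀ i, K i x = 0 ∧ ∀ j, pd j (K i) x = 0 := by
    refine ⟨⋃ i, tsupport (K i), isCompact_iUnion hKc, fun x hx i => ?_⟩
    have hxi : x ∉ tsupport (K i) := fun h => hx (mem_iUnion_of_mem i h)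
    exact ⟨image_eq_zero_of_notMem_tsupport hxi, pd_eq_zero_of_notMem_tsupport hxi⟩
  have hint : ∀ F : E2 → ℝ, Continuous F → (∀ x ∉ S, F x = 0) → Integrable F :=
    fun F hF hFS => hF.integrable_of_hasCompactSupport (.intro hS hFS)
  have hD : Integrable fun x => jb t x ^ 2 * (pd 0 (K 0) x + pd 1 (K 1) x) ^ 2 :=
    hint _ (by fun_prop) fun x hx => by simp [(hvanish x hx _).2]
  have hR : Integrable fun x => jb t x ^ 2 * (-pd 1 (K 0) x + pd 0 (K 1) x) ^ 2 :=
    hint _ (by fun_prop) fun x hx => by simp [(hvanish x hx _).2]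
  have hN : Integrable fun x => ∑ i, K i x ^ 2 :=
    hint _ (continuous_finsetSum _ fun i _ => ((hK i).continuous.pow 2))
      fun x hx => by simp [(hvanish x hx _).1]
  have hDR : Integrable fun x => jb t x ^ 2 * (pd 0 (K 0) x + pd 1 (K 1) x) ^ 2
      + jb t x ^ 2 * (-pd 1 (K 0) x + pd 0 (K 1) x) ^ 2 := hD.add hR
  have hDRN : Integrable fun x => jb t x ^ 2 * (pd 0 (K 0) x + pd 1 (K 1) x) ^ 2
      + jb t x ^ 2 * (-pd 1 (K 0) x + pd 0 (K 1) x) ^ 2 + 16 * ∑ i, K i x ^ 2 :=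
    hDR.add (hN.const_mul 16)
  have hΦ := integrable_div_jb_sq_mul hV hVc t
  calc _ ≤ ∫ x, 2 * (jb t x ^ 2 * (pd 0 (K 0) x + pd 1 (K 1) x) ^ 2
          + jb t x ^ 2 * (-pd 1 (K 0) x + pd 0 (K 1) x) ^ 2 + 16 * ∑ i, K i x ^ 2
          - 2 * ∑ i, (jb t x ^ 2 * pd i (V i) x +
            V i x * jbSqDeriv t x (EuclideanSpace.single i 1))) := by
        refine integral_mono_of_nonneg (.of_forall fun x => by positivity)
          ((hDRN.sub (hΦ.const_mul 2)).const_mul 2)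
          (.of_forall fun x => ?_)
        simp only [Fin.sum_univ_two, V, Matrix.cons_val_zero, Matrix.cons_val_one]
        exact weighted_jacobian_sq_le
          (jacobian_det_eq_pd_add_pd ((hK 0).of_le one_le_two) (hK 1) x).symm
          (abs_jbSqDeriv_single_le t x 0) (abs_jbSqDeriv_single_le t x 1)
    _ = _ := by
        rw [integral_const_mul, integral_sub hDRN (hΦ.const_mul 2), integral_add hDR
          (hN.const_mul 16), integral_add hD hR, integral_const_mul, integral_const_mul,
          integral_div_jb_sq_mul_eq_zero hV hVc t]
        ring

/-- There is an absolute constant `C` such that for every `C²` compactly supported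
vector field `K : ℝ² → ℝ²` and every `t ∈ ℝ`,
`‖⟨t-r⟩∇K‖_{L²} ≤ C (‖⟨t-r⟩∇·K‖_{L²} + ‖⟨t-r⟩∇⊥·K‖_{L²} + ‖K‖_{L²})`. -/
theorem weighted_gradient_estimate :
    ∃ C : ℝ, 0 < C ∧
      ∀ (K : Fin 2 → E2 → ℝ), (∀ i, ContDiff ℝ 2 (K i)) →
        (∀ i, HasCompactSupport (K i)) →
        ∀ t : ℝ,
          Real.sqrt (∫ x : E2,
              (jb t x) ^ 2 * ∑ i : Fin 2, ∑ j : Fin 2, (pd j (K i) x) ^ 2) ≤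
            C * (Real.sqrt (∫ x : E2,
                  (jb t x) ^ 2 * (pd 0 (K 0) x + pd 1 (K 1) x) ^ 2)
              + Real.sqrt (∫ x : E2,
                  (jb t x) ^ 2 * (-pd 1 (K 0) x + pd 0 (K 1) x) ^ 2)
              + Real.sqrt (∫ x : E2, ∑ i : Fin 2, (K i x) ^ 2)) :=
  ⟨6, by norm_num, fun K hK hKc t => sqrt_le_six_mul_add
    (integral_nonneg fun _ => by positivity) (integral_nonneg fun _ => by positivity)
    (integral_nonneg fun _ => by positivity) (integral_jb_sq_sum_sq_pd_le hK hKc t)⟩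
end
end

section
/- For all $f \in H^2(\mathbb{R}^2)$ and all $x \in \mathbb{R}^2 \setminus \{0\}$, there is an absolute constant $C$ such that $|x| \, |f(x)|^2 \le C \sum_{a=0,1} \left( \|\partial_r \Omega^a f\|_{L^2(\mathbb{R}^2)}^2 + \|\Omega^a f\|_{L^2(\mathbb{R}^2)}^2 \right)$, provided the right-hand side is finite. -/
open MeasureTheory

noncomputable section

/-- Components of `ω = x / |x|`. -/
noncomputable def omegaV (x : E2) (k : Fin 2) : ℝ := x k / ‖x‖

/-- Components of `x⊥ = (-x₂, x₁)`. -/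
noncomputable def xPerp (x : E2) (k : Fin 2) : ℝ :=
  if k = 0 then -(x 1) else x 0

/-- Radial derivative `∂ᵣf = (x/|x|) · ∇f`. -/
noncomputable def radialD (f : E2 → ℝ) (x : E2) : ℝ :=
  ∑ k : Fin 2, omegaV x k * pd k f x

/-- Rotation vector field `Ωf = x⊥ · ∇f = -x₂∂₁f + x₁∂₂f`. -/
noncomputable def angularD (f : E2 → ℝ) (x : E2) : ℝ :=
  ∑ k : Fin 2, xPerp x k * pd k f x

/-!
Write `u(t, φ) = f(t cos φ, t sin φ)`, so that `∂ₜu = ∂ᵣf` and `∂_φ u = Ωf`. Along each ray,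
`t (u² + (Ωf)²)` and its derivative are integrable, so it vanishes at infinity; integrating the
derivative from `r` to `∞` bounds `r (u² + (Ωf)²)(r, φ)` by the ray energy
`∫ t (u² + (∂ᵣu)² + (Ωf)² + (∂ᵣΩf)²) dt`, whose integral over `φ` is the right-hand side
(polar coordinates). On the circle of radius `r`, `u²` varies by at most
`∫ |2 u ∂_φ u| dφ ≤ ∫ (u² + (Ωf)²) dφ`. Comparing `u(r, θ)` with `u(r, φ)` for an angle `φ`
whose ray energy is at most its mean gives the bound with `C = 2`.
-/

open Real Set

theorem mul_sq_le_integral_Ioi {v v' : ℝ → ℝ} {r : ℝ} (hr : 0 < r)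
    (hv : ∀ t ∈ Ici r, HasDerivAt v (v' t) t)
    (hv' : AEStronglyMeasurable v' (volume.restrict (Ioi r)))
    (hint : IntegrableOn (fun t => t * (v t ^ 2 + v' t ^ 2)) (Ioi r)) :
    r * v r ^ 2 ≤ ∫ t in Ioi r, t * (v t ^ 2 + v' t ^ 2) := by
  have hF : ∀ t ∈ Ici r, HasDerivAt (fun t => t * v t ^ 2)
      (v t ^ 2 + t * (2 * v t * v' t)) t := fun t ht =>
    ((hasDerivAt_id' t).mul ((hv t ht).pow 2)).congr_deriv (by simp only [Pi.pow_apply]; ring)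
  have hv_meas : AEStronglyMeasurable v (volume.restrict (Ioi r)) :=
    (ContinuousOn.mono (fun t ht => (hv t ht).continuousAt.continuousWithinAt)
      Ioi_subset_Ici_self).aestronglyMeasurable measurableSet_Ioi
  have hF_int : IntegrableOn (fun t => t * v t ^ 2) (Ioi r) := by
    refine hint.mono' (by fun_prop) ?_
    filter_upwards [ae_restrict_mem measurableSet_Ioi] with t (ht : r < t)
    have ht0 : 0 ≤ t := (hr.trans ht).le
    rw [Real.norm_eq_abs, abs_of_nonneg (by positivity)]
    nlinarith [mul_nonneg ht0 (sq_nonneg (v' t))]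
  -- the constant: `v ^ 2 ≤ r⁻¹ * t * v ^ 2` on `(r, ∞)` and `2 t |v v'| ≤ t (v ^ 2 + v' ^ 2)`
  have hF'_int : IntegrableOn (fun t => v t ^ 2 + t * (2 * v t * v' t)) (Ioi r) := by
    refine (hint.const_mul (r⁻¹ + 1)).mono' (by fun_prop) ?_
    filter_upwards [ae_restrict_mem measurableSet_Ioi] with t (ht : r < t)
    have ht0 : 0 < t := hr.trans ht
    have hvr : v t ^ 2 ≤ r⁻¹ * (t * v t ^ 2) := by
      rw [← div_eq_inv_mul, le_div_iff₀ hr]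
      nlinarith [sq_nonneg (v t)]
    rw [Real.norm_eq_abs, abs_le]
    constructor <;> nlinarith [mul_nonneg ht0.le (sq_nonneg (v t + v' t)),
      mul_nonneg ht0.le (sq_nonneg (v t - v' t)), mul_nonneg (inv_pos.2 hr).le
        (mul_nonneg ht0.le (sq_nonneg (v' t))), sq_nonneg (v t)]
  have hFTC := integral_Ioi_of_hasDerivAt_of_tendsto' hF hF'_int
    (tendsto_zero_of_hasDerivAt_of_integrableOn_Ioi
      (fun t ht => hF t (Ioi_subset_Ici_self ht)) hF'_int hF_int)
  calc r * v r ^ 2 = ∫ t in Ioi r, -(v t ^ 2 + t * (2 * v t * v' t)) := by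
        rw [integral_neg, hFTC]; ring
    _ ≤ ∫ t in Ioi r, t * (v t ^ 2 + v' t ^ 2) := by
        refine setIntegral_mono_on hF'_int.neg hint measurableSet_Ioi fun t (ht : r < t) => ?_
        nlinarith [mul_nonneg (hr.trans ht).le (sq_nonneg (v t + v' t)), sq_nonneg (v t)]

theorem ofReal_mul_sq_le_lintegral_Ioi {v v' : ℝ → ℝ} {r : ℝ} (hr : 0 < r)
    (hv : ∀ t ∈ Ici r, HasDerivAt v (v' t) t)
    (hv' : AEStronglyMeasurable v' (volume.restrict (Ioi r))) :
    ENNReal.ofReal (r * v r ^ 2) ≤ ∫⁻ t in Ioi r, ENNReal.ofReal (t * (v t ^ 2 + v' t ^ 2)) := by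
  by_cases hfin : ∫⁻ t in Ioi r, ENNReal.ofReal (t * (v t ^ 2 + v' t ^ 2)) = ⊤
  · simp [hfin]
  have hnonneg : 0 ≤ᵐ[volume.restrict (Ioi r)] fun t => t * (v t ^ 2 + v' t ^ 2) := by
    filter_upwards [ae_restrict_mem measurableSet_Ioi] with t (ht : r < t)
    have := (hr.trans ht).le
    positivity
  have hv_meas : AEStronglyMeasurable v (volume.restrict (Ioi r)) :=
    (ContinuousOn.mono (fun t ht => (hv t ht).continuousAt.continuousWithinAt)
      Ioi_subset_Ici_self).aestronglyMeasurable measurableSet_Ioi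
  have hint : IntegrableOn (fun t => t * (v t ^ 2 + v' t ^ 2)) (Ioi r) :=
    ⟨by fun_prop, (hasFiniteIntegral_iff_ofReal hnonneg).2 (lt_top_iff_ne_top.2 hfin)⟩
  rw [← ofReal_integral_eq_lintegral_ofReal hint hnonneg]
  exact ENNReal.ofReal_le_ofReal (mul_sq_le_integral_Ioi hr hv hv' hint)

theorem sq_le_sq_add_integral {a a' : ℝ → ℝ} {s t θ φ : ℝ}
    (ha : ∀ ψ, HasDerivAt a (a' ψ) ψ) (ha' : Continuous a')
    (hθ : θ ∈ Icc s t) (hφ : φ ∈ Icc s t) :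
    a θ ^ 2 ≤ a φ ^ 2 + ∫ ψ in s..t, (a ψ ^ 2 + a' ψ ^ 2) := by
  have hac : Continuous a := continuous_iff_continuousAt.2 fun ψ => (ha ψ).continuousAt
  have hFTC : ∫ ψ in φ..θ, 2 * a ψ * a' ψ = a θ ^ 2 - a φ ^ 2 :=
    intervalIntegral.integral_eq_sub_of_hasDerivAt
      (fun ψ _ => by simpa [mul_comm, mul_assoc] using (ha ψ).pow 2)
      ((by fun_prop : Continuous fun ψ => 2 * a ψ * a' ψ).intervalIntegrable _ _)
  have hst : s ≤ t := hθ.1.trans hθ.2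
  have hsub : uIoc φ θ ⊆ uIoc s t := uIoc_subset_uIoc_of_uIcc_subset_uIcc
    (uIcc_subset_uIcc (by rwa [uIcc_of_le hst]) (by rwa [uIcc_of_le hst]))
  calc a θ ^ 2 = a φ ^ 2 + ∫ ψ in φ..θ, 2 * a ψ * a' ψ := by rw [hFTC]; ring
    _ ≤ a φ ^ 2 + |(∫ ψ in φ..θ, |2 * a ψ * a' ψ|)| := by
        gcongr
        exact (le_abs_self _).trans (by simpa only [Real.norm_eq_abs] using
          intervalIntegral.norm_integral_le_abs_integral_norm (f := fun ψ => 2 * a ψ * a' ψ))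
    _ ≤ a φ ^ 2 + |(∫ ψ in s..t, |2 * a ψ * a' ψ|)| := by
        gcongr 1
        exact intervalIntegral.abs_integral_mono_interval hsub (ae_of_all _ fun _ => abs_nonneg _)
          ((by fun_prop : Continuous fun ψ => |2 * a ψ * a' ψ|).intervalIntegrable _ _)
    _ = a φ ^ 2 + ∫ ψ in s..t, |2 * a ψ * a' ψ| := by
        rw [abs_of_nonneg (intervalIntegral.integral_nonneg hst fun _ _ => abs_nonneg _)]
    _ ≤ a φ ^ 2 + ∫ ψ in s..t, (a ψ ^ 2 + a' ψ ^ 2) := by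
        gcongr 1
        refine intervalIntegral.integral_mono_on hst
          ((by fun_prop : Continuous fun ψ => |2 * a ψ * a' ψ|).intervalIntegrable _ _)
          ((by fun_prop : Continuous fun ψ => a ψ ^ 2 + a' ψ ^ 2).intervalIntegrable _ _)
          fun ψ _ => ?_
        rw [abs_le]
        constructor <;> nlinarith [sq_nonneg (a ψ + a' ψ), sq_nonneg (a ψ - a' ψ)]

def polarE2 (t φ : ℝ) : E2 := !₂[t * cos φ, t * sin φ]

lemma polarE2_eq_add (t φ : ℝ) : polarE2 t φ =
    (t * cos φ) • EuclideanSpace.single 0 1 + (t * sin φ) • EuclideanSpace.single 1 1 := by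
  ext i; fin_cases i <;> simp [polarE2]

lemma orthonormalBasisOneI_repr_polarCoord_symm (p : ℝ × ℝ) :
    Complex.orthonormalBasisOneI.repr (Complex.polarCoord.symm p) = polarE2 p.1 p.2 := by
  ext i; fin_cases i <;> simp [polarE2, Complex.cos_ofReal_re, Complex.sin_ofReal_re]

lemma norm_polarE2 (t φ : ℝ) : ‖polarE2 t φ‖ = |t| := by
  rw [← orthonormalBasisOneI_repr_polarCoord_symm (t, φ), LinearIsometryEquiv.norm_map,
    Complex.norm_polarCoord_symm]

lemma continuous_polarE2 : Continuous fun p : ℝ × ℝ => polarE2 p.1 p.2 := by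
  simp_rw [polarE2_eq_add]; fun_prop

lemma exists_polarE2_eq (x : E2) : ∃ θ ∈ Icc (-π) π, polarE2 ‖x‖ θ = x := by
  set z := Complex.orthonormalBasisOneI.repr.symm x
  refine ⟨z.arg, ⟨(Complex.neg_pi_lt_arg z).le, Complex.arg_le_pi z⟩, ?_⟩
  calc polarE2 ‖x‖ z.arg
        = Complex.orthonormalBasisOneI.repr (Complex.polarCoord.symm (‖z‖, z.arg)) := by
        rw [orthonormalBasisOneI_repr_polarCoord_symm, LinearIsometryEquiv.norm_map]
    _ = x := by
        simp only [Complex.polarCoord_symm_apply, Complex.ofReal_cos, Complex.ofReal_sin,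
          Complex.norm_mul_cos_add_sin_mul_I, z, LinearIsometryEquiv.apply_symm_apply]

lemma lintegral_eq_lintegral_polarE2 (g : E2 → ENNReal) (hg : Measurable g) :
    ∫⁻ y, g y = ∫⁻ φ in Ioo (-π) π, ∫⁻ t in Ioi 0, ENNReal.ofReal t * g (polarE2 t φ) := by
  have hmeas : Measurable fun p : ℝ × ℝ => ENNReal.ofReal p.1 * g (polarE2 p.1 p.2) := by
    have := continuous_polarE2.measurable
    fun_prop
  rw [← (Complex.orthonormalBasisOneI.repr.measurePreserving).lintegral_comp hg,
    ← Complex.lintegral_comp_polarCoord_symm, polarCoord_target]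
  simp_rw [orthonormalBasisOneI_repr_polarCoord_symm, smul_eq_mul]
  rw [Measure.volume_eq_prod, ← Measure.prod_restrict, lintegral_prod _ hmeas.aemeasurable,
    lintegral_lintegral_swap hmeas.aemeasurable]

lemma hasDerivAt_polarE2_radius (t φ : ℝ) :
    HasDerivAt (fun s => polarE2 s φ) (polarE2 1 φ) t := by
  simp_rw [polarE2_eq_add]
  exact (((hasDerivAt_mul_const (cos φ)).smul_const _).add
    ((hasDerivAt_mul_const (sin φ)).smul_const _)).congr_deriv (by simp)

lemma hasDerivAt_polarE2_angle (t φ : ℝ) :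
    HasDerivAt (fun ψ => polarE2 t ψ) !₂[-(t * sin φ), t * cos φ] φ := by
  simp_rw [polarE2_eq_add]
  exact ((((hasDerivAt_cos φ).const_mul t).smul_const _).add
    (((hasDerivAt_sin φ).const_mul t).smul_const _)).congr_deriv
    (by ext i; fin_cases i <;> simp)

lemma fderiv_apply_eq_sum_pd (f : E2 → ℝ) (y v : E2) :
    fderiv ℝ f y v = ∑ k, v k * pd k f y := by
  conv_lhs => rw [← (EuclideanSpace.basisFun (Fin 2) ℝ).sum_repr v]
  simp [pd]

def energyDensity (f : E2 → ℝ) (y : E2) : ℝ :=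
  f y ^ 2 + radialD f y ^ 2 + angularD f y ^ 2 + radialD (angularD f) y ^ 2

def rayEnergy (f : E2 → ℝ) (φ : ℝ) : ENNReal :=
  ∫⁻ t in Ioi 0, ENNReal.ofReal t * ENNReal.ofReal (energyDensity f (polarE2 t φ))

section
variable {f : E2 → ℝ}

lemma hasDerivAt_comp_polarE2_radius {t φ : ℝ} (ht : 0 < t)
    (hf : DifferentiableAt ℝ f (polarE2 t φ)) :
    HasDerivAt (fun s => f (polarE2 s φ)) (radialD f (polarE2 t φ)) t := by
  refine (hf.hasFDerivAt.comp_hasDerivAt t (hasDerivAt_polarE2_radius t φ)).congr_deriv ?_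
  simp only [fderiv_apply_eq_sum_pd, radialD, omegaV, norm_polarE2, abs_of_pos ht]
  simp [polarE2, ht.ne']

lemma hasDerivAt_comp_polarE2_angle {t φ : ℝ} (hf : DifferentiableAt ℝ f (polarE2 t φ)) :
    HasDerivAt (fun ψ => f (polarE2 t ψ)) (angularD f (polarE2 t φ)) φ := by
  refine (hf.hasFDerivAt.comp_hasDerivAt φ (hasDerivAt_polarE2_angle t φ)).congr_deriv ?_
  simp [fderiv_apply_eq_sum_pd, angularD, xPerp, polarE2]

lemma measurable_pd (k : Fin 2) : Measurable (pd k f) :=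
  measurable_fderiv_apply_const ℝ f _

lemma measurable_radialD : Measurable (radialD f) := by
  unfold radialD omegaV
  have := measurable_pd (f := f)
  fun_prop

lemma measurable_angularD : Measurable (angularD f) := by
  have hperp (k : Fin 2) : Measurable fun x : E2 => xPerp x k := by
    unfold xPerp; split_ifs <;> fun_prop
  have := measurable_pd (f := f)
  unfold angularD
  fun_prop

lemma contDiff_angularD {n : ℕ∞} (hf : ContDiff ℝ (n + 1) f) : ContDiff ℝ n (angularD f) := by
  have hpd (k : Fin 2) : ContDiff ℝ n (pd k f) :=
    (hf.fderiv_right le_rfl).clm_apply contDiff_const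
  have hperp (k : Fin 2) : ContDiff ℝ n (fun x : E2 => xPerp x k) := by
    unfold xPerp; split_ifs <;> fun_prop
  unfold angularD
  fun_prop

lemma measurable_energyDensity (hf : Measurable f) : Measurable (energyDensity f) := by
  unfold energyDensity
  have := measurable_radialD (f := f)
  have := measurable_radialD (f := angularD f)
  have := measurable_angularD (f := f)
  fun_prop

lemma lintegral_rayEnergy (hf : Measurable f) :
    ∫⁻ φ in Ioo (-π) π, rayEnergy f φ = ∫⁻ y, ENNReal.ofReal (energyDensity f y) :=
  (lintegral_eq_lintegral_polarE2 _ (measurable_energyDensity hf).ennreal_ofReal).symm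

lemma measurable_rayEnergy (hf : Measurable f) : Measurable (rayEnergy f) := by
  have := (measurable_energyDensity hf).ennreal_ofReal.comp
    (continuous_polarE2.comp continuous_swap).measurable
  exact Measurable.lintegral_prod_right (f := fun φ t =>
    ENNReal.ofReal t * ENNReal.ofReal (energyDensity f (polarE2 t φ))) (by fun_prop)

lemma exists_rayEnergy_le (hf : Measurable f) :
    ∃ φ ∈ Icc (-π) π, rayEnergy f φ ≤ ∫⁻ y, ENNReal.ofReal (energyDensity f y) := by
  have hvol : volume (Ioo (-π) π) = ENNReal.ofReal (2 * π) := by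
    rw [Real.volume_Ioo]; ring_nf
  obtain ⟨φ, hφ, hle⟩ := exists_le_setLAverage (μ := volume) (s := Ioo (-π) π)
    (by simp [hvol, pi_pos]) (hvol ▸ ENNReal.ofReal_ne_top)
    (measurable_rayEnergy hf).aemeasurable
  refine ⟨φ, Ioo_subset_Icc_self hφ, hle.trans ?_⟩
  rw [setLAverage_eq, lintegral_rayEnergy hf]
  refine ENNReal.div_le_of_le_mul (le_mul_of_one_le_right' ?_)
  rw [hvol, ← ENNReal.ofReal_one]
  exact ENNReal.ofReal_le_ofReal (by linarith [pi_gt_three])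

lemma ofReal_mul_sq_add_sq_le_rayEnergy (hf : ContDiff ℝ 2 f) {r : ℝ} (hr : 0 < r) (φ : ℝ) :
    ENNReal.ofReal (r * (f (polarE2 r φ) ^ 2 + angularD f (polarE2 r φ) ^ 2))
      ≤ rayEnergy f φ := by
  have hΩf : ContDiff ℝ 1 (angularD f) := contDiff_angularD hf
  have hcurve : Continuous fun t => polarE2 t φ :=
    continuous_polarE2.comp (continuous_id.prodMk continuous_const)
  have hu := ofReal_mul_sq_le_lintegral_Ioi hr
    (fun t ht => hasDerivAt_comp_polarE2_radius (hr.trans_le ht)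
      ((hf.differentiable two_ne_zero).differentiableAt))
    (measurable_radialD.comp hcurve.measurable).aestronglyMeasurable
  have hw := ofReal_mul_sq_le_lintegral_Ioi hr
    (fun t ht => hasDerivAt_comp_polarE2_radius (hr.trans_le ht)
      ((hΩf.differentiable one_ne_zero).differentiableAt))
    (measurable_radialD.comp hcurve.measurable).aestronglyMeasurable
  have hmeas : Measurable fun t => ENNReal.ofReal
      (t * (f (polarE2 t φ) ^ 2 + radialD f (polarE2 t φ) ^ 2)) := by
    have hfm : Measurable fun t => f (polarE2 t φ) :=
      hf.continuous.measurable.comp hcurve.measurable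
    have hdfm : Measurable fun t => radialD f (polarE2 t φ) :=
      measurable_radialD.comp hcurve.measurable
    exact (measurable_id.mul ((hfm.pow_const 2).add (hdfm.pow_const 2))).ennreal_ofReal
  calc ENNReal.ofReal (r * (f (polarE2 r φ) ^ 2 + angularD f (polarE2 r φ) ^ 2))
      = ENNReal.ofReal (r * f (polarE2 r φ) ^ 2)
        + ENNReal.ofReal (r * angularD f (polarE2 r φ) ^ 2) := by
        rw [mul_add, ENNReal.ofReal_add (by positivity) (by positivity)]
    _ ≤ _ := add_le_add hu hw
    _ = ∫⁻ t in Ioi r, ENNReal.ofReal t * ENNReal.ofReal (energyDensity f (polarE2 t φ)) := by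
        rw [← lintegral_add_left hmeas]
        refine setLIntegral_congr_fun measurableSet_Ioi fun t (ht : r < t) => ?_
        have ht0 : 0 ≤ t := (hr.trans ht).le
        rw [← ENNReal.ofReal_add (by positivity) (by positivity), ← ENNReal.ofReal_mul ht0,
          energyDensity]
        ring_nf
    _ ≤ rayEnergy f φ := lintegral_mono_set (Ioi_subset_Ioi hr.le)

lemma ofReal_mul_sq_polarE2_le (hf : ContDiff ℝ 2 f) {r θ φ : ℝ} (hr : 0 < r)
    (hθ : θ ∈ Icc (-π) π) (hφ : φ ∈ Icc (-π) π) :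
    ENNReal.ofReal (r * f (polarE2 r θ) ^ 2)
      ≤ rayEnergy f φ + ∫⁻ y, ENNReal.ofReal (energyDensity f y) := by
  set β : ℝ → ℝ := fun ψ => r * (f (polarE2 r ψ) ^ 2 + angularD f (polarE2 r ψ) ^ 2)
  have hcircle : Continuous fun ψ => polarE2 r ψ :=
    continuous_polarE2.comp (continuous_const.prodMk continuous_id)
  have hΩf : Continuous fun ψ => angularD f (polarE2 r ψ) :=
    (contDiff_angularD hf : ContDiff ℝ 1 (angularD f)).continuous.comp hcircle
  have hβ : Continuous β := by
    have := hf.continuous.comp hcircle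
    fun_prop
  have hsq := sq_le_sq_add_integral
    (fun ψ => hasDerivAt_comp_polarE2_angle ((hf.differentiable two_ne_zero).differentiableAt))
    hΩf hθ hφ
  have hβ_le :
      ENNReal.ofReal (∫ ψ in -π..π, β ψ) ≤ ∫⁻ y, ENNReal.ofReal (energyDensity f y) := by
    rw [intervalIntegral.integral_of_le (by linarith [pi_pos]),
      ofReal_integral_eq_lintegral_ofReal hβ.integrableOn_Ioc
        (ae_of_all _ fun ψ => by positivity),
      ← lintegral_rayEnergy hf.continuous.measurable, ← setLIntegral_congr Ioo_ae_eq_Ioc]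
    exact lintegral_mono fun ψ => ofReal_mul_sq_add_sq_le_rayEnergy hf hr ψ
  calc ENNReal.ofReal (r * f (polarE2 r θ) ^ 2)
      ≤ ENNReal.ofReal (β φ + ∫ ψ in -π..π, β ψ) := by
        refine ENNReal.ofReal_le_ofReal ?_
        rw [intervalIntegral.integral_const_mul]
        nlinarith [sq_nonneg (angularD f (polarE2 r φ))]
    _ ≤ ENNReal.ofReal (β φ) + ENNReal.ofReal (∫ ψ in -π..π, β ψ) := ENNReal.ofReal_add_le
    _ ≤ rayEnergy f φ + ∫⁻ y, ENNReal.ofReal (energyDensity f y) :=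
        add_le_add (ofReal_mul_sq_add_sq_le_rayEnergy hf hr φ) hβ_le


lemma norm_mul_sq_le_two_mul_integral_energyDensity (hf : ContDiff ℝ 2 f)
    (hint : Integrable (energyDensity f)) {x : E2} (hx : x ≠ 0) :
    ‖x‖ * f x ^ 2 ≤ 2 * ∫ y, energyDensity f y := by
  have hnonneg (y : E2) : 0 ≤ energyDensity f y := by unfold energyDensity; positivity
  obtain ⟨θ, hθ, hxθ⟩ := exists_polarE2_eq x
  obtain ⟨φ, hφ, hφ_le⟩ := exists_rayEnergy_le hf.continuous.measurable
  refine (ENNReal.ofReal_le_ofReal_iff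
    (mul_nonneg zero_le_two (integral_nonneg hnonneg))).1 ?_
  calc ENNReal.ofReal (‖x‖ * f x ^ 2)
      ≤ rayEnergy f φ + ∫⁻ y, ENNReal.ofReal (energyDensity f y) := by
        simpa only [hxθ] using ofReal_mul_sq_polarE2_le hf (norm_pos_iff.2 hx) hθ hφ
    _ ≤ 2 * ∫⁻ y, ENNReal.ofReal (energyDensity f y) := by rw [two_mul]; gcongr
    _ = ENNReal.ofReal (2 * ∫ y, energyDensity f y) := by
        rw [ENNReal.ofReal_mul zero_le_two, ENNReal.ofReal_ofNat,
          ofReal_integral_eq_lintegral_ofReal hint (ae_of_all _ hnonneg)]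

lemma integral_energyDensity (h₀ : Integrable fun y => f y ^ 2)
    (h₁ : Integrable fun y => radialD f y ^ 2) (h₂ : Integrable fun y => angularD f y ^ 2)
    (h₃ : Integrable fun y => radialD (angularD f) y ^ 2) :
    ∫ y, energyDensity f y = (∫ y, f y ^ 2) + (∫ y, radialD f y ^ 2)
      + (∫ y, angularD f y ^ 2) + (∫ y, radialD (angularD f) y ^ 2) := by
  have h₀₁ : Integrable fun y => f y ^ 2 + radialD f y ^ 2 := h₀.add h₁
  have h₀₁₂ : Integrable fun y => f y ^ 2 + radialD f y ^ 2 + angularD f y ^ 2 := h₀₁.add h₂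
  simp only [energyDensity]
  rw [integral_add h₀₁₂ h₃, integral_add h₀₁ h₂, integral_add h₀ h₁]

end

/-- Weighted Sobolev inequality: there is an absolute constant `C` such that for all
`f ∈ H²(ℝ²)` and all `x ≠ 0`,
`|x| |f(x)|² ≤ C ∑_{a=0,1} (‖∂ᵣΩᵃf‖²_{L²} + ‖Ωᵃf‖²_{L²})`, provided the right-hand
side is finite. -/
theorem weighted_sobolev_r_decay :
    ∃ C : ℝ, 0 < C ∧
      ∀ f : E2 → ℝ, ContDiff ℝ 2 f →
        Integrable (fun x : E2 => (f x) ^ 2) →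
        Integrable (fun x : E2 => (radialD f x) ^ 2) →
        Integrable (fun x : E2 => (angularD f x) ^ 2) →
        Integrable (fun x : E2 => (radialD (angularD f) x) ^ 2) →
        ∀ x : E2, x ≠ 0 →
          ‖x‖ * (f x) ^ 2 ≤
            C * ((∫ y : E2, (radialD f y) ^ 2) + (∫ y : E2, (f y) ^ 2)
              + (∫ y : E2, (radialD (angularD f) y) ^ 2)
              + (∫ y : E2, (angularD f y) ^ 2)) := by
  refine ⟨2, two_pos, fun f hf h₀ h₁ h₂ h₃ x hx => ?_⟩
  have := norm_mul_sq_le_two_mul_integral_energyDensity hf (((h₀.add h₁).add h₂).add h₃) hx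
  rw [integral_energyDensity h₀ h₁ h₂ h₃] at this
  linarith
end
end
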